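/- arXiv:1112.1965 — 9 statements merged into one kernel-verified Lean document; each statement's English description precedes it below -/
import Mathlib

section
/- Let L₀, L₁, L₂ and K₀, K₁, K₂ be vectors in ℝ³ such that (L₀, L₁, L₂) is a basis of ℝ³ and the simplicity constraints hold: L_μ·K_ν + L_ν·K_μ = 0 for all μ, ν ∈ {0,1,2}. Then there exist a real number χ⁰ ≠ 0, a vector χ ∈ ℝ³, vectors e₀, e₁, e₂ ∈ ℝ³ and real numbers e⁰₀, e⁰₁, e⁰₂ such that K_μ = χ × e_μ and L_μ = χ⁰·e_μ − e⁰_μ·χ for all μ ∈ {0,1,2}. -/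
open Matrix

/-!
Let `A` be the linear map sending the basis `L μ` to `K μ`. The simplicity constraints say
exactly that the bilinear form `(x, y) ↦ x ⬝ᵥ A y` is antisymmetric on the basis, so `A` is a
skew-symmetric matrix, and in three dimensions every skew-symmetric matrix is `χ ×` for its
axial vector `χ`. Hence `K μ = χ × L μ`, which is the claim with `χ⁰ = 1`, `e = L`, `e⁰ = 0`.
-/

theorem Matrix.exists_mulVec_eq_cross_of_transpose_eq_neg {R : Type*} [CommRing R]
    [NoZeroDivisors R] [CharZero R] {A : Matrix (Fin 3) (Fin 3) R} (hA : Aᵀ = -A) :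
    ∃ χ : Fin 3 → R, ∀ v, A *ᵥ v = χ ⨯₃ v := by
  have skew : ∀ i j, A j i = -A i j := fun i j => congrFun (congrFun hA i) j
  have diag : ∀ i, A i i = 0 := fun i => CharZero.eq_neg_self_iff.mp (skew i i)
  refine ⟨![A 2 1, A 0 2, A 1 0], fun v => ?_⟩
  ext i
  fin_cases i <;>
    simp only [Fin.zero_eta, Fin.mk_one, Fin.reduceFinMk, Fin.isValue, mulVec, dotProduct,
      Fin.sum_univ_three, cross_apply, cons_val_zero, cons_val_one, cons_val, diag, skew 0 1,
      skew 1 2, skew 0 2] <;> ring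

theorem Matrix.exists_transpose_eq_neg_mulVec_eq {n R : Type*} [Fintype n] [DecidableEq n]
    [CommRing R] {M N : Matrix n n R} (hM : IsUnit M) (hMN : M * Nᵀ + N * Mᵀ = 0) :
    ∃ A : Matrix n n R, Aᵀ = -A ∧ ∀ i, A *ᵥ M i = N i := by
  have hdet : IsUnit M.det := (isUnit_iff_isUnit_det M).mp hM
  have hdetT : IsUnit Mᵀ.det := by rwa [det_transpose]
  have hNM : N * Mᵀ = -(M * Nᵀ) := eq_neg_of_add_eq_zero_right hMN
  refine ⟨Nᵀ * Mᵀ⁻¹, ?_, fun i => ?_⟩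
  · calc (Nᵀ * Mᵀ⁻¹)ᵀ = M⁻¹ * (N * Mᵀ) * Mᵀ⁻¹ := by
          rw [transpose_mul, transpose_transpose, transpose_nonsing_inv, transpose_transpose,
            Matrix.mul_assoc, Matrix.mul_assoc, mul_nonsing_inv _ hdetT, Matrix.mul_one]
      _ = -(Nᵀ * Mᵀ⁻¹) := by
          rw [hNM, Matrix.mul_neg, Matrix.neg_mul, ← Matrix.mul_assoc, nonsing_inv_mul _ hdet,
            Matrix.one_mul]
  · have h : Nᵀ * Mᵀ⁻¹ * Mᵀ = Nᵀ := by
      rw [Matrix.mul_assoc, nonsing_inv_mul _ hdetT, Matrix.mul_one]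
    ext j
    -- the `i`-th column of `A * Mᵀ` is `A *ᵥ M i` by definition of matrix multiplication
    exact congrFun (congrFun h j) i

theorem gravitational_sector_general
    (L K : Fin 3 → (Fin 3 → ℝ))
    (hLindep : LinearIndependent ℝ L)
    (hC : ∀ μ ν : Fin 3, L μ ⬝ᵥ K ν + L ν ⬝ᵥ K μ = 0) :
    ∃ (χ0 : ℝ) (χ : Fin 3 → ℝ) (e : Fin 3 → (Fin 3 → ℝ)) (e0 : Fin 3 → ℝ),
      χ0 ≠ 0 ∧
      (∀ μ : Fin 3, K μ = crossProduct χ (e μ)) ∧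
      (∀ μ : Fin 3, L μ = χ0 • e μ - e0 μ • χ) := by
  have hL : IsUnit (of L) := linearIndependent_rows_iff_isUnit.mp hLindep
  have hLK : of L * (of K)ᵀ + of K * (of L)ᵀ = 0 := by
    ext μ ν
    change L μ ⬝ᵥ K ν + K μ ⬝ᵥ L ν = 0
    rw [dotProduct_comm (K μ)]
    exact hC μ ν
  obtain ⟨A, hA, hAL⟩ := exists_transpose_eq_neg_mulVec_eq hL hLK
  obtain ⟨χ, hχ⟩ := exists_mulVec_eq_cross_of_transpose_eq_neg hA
  exact ⟨1, χ, L, 0, one_ne_zero, fun μ => (hAL μ).symm.trans (hχ (L μ)), fun μ => by simp⟩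

/-- **Gravitational sector of Proposition 1.**
If `(L 0, L 1, L 2)` is a basis of `ℝ³` (linearly independent and spanning) and the
simplicity constraints `L μ ⬝ᵥ K ν + L ν ⬝ᵥ K μ = 0` hold, then there exist `χ⁰ ≠ 0`,
`χ ∈ ℝ³`, vectors `e μ ∈ ℝ³` and scalars `e⁰ μ` such that `K μ = χ × e μ` and
`L μ = χ⁰ • e μ - e⁰ μ • χ`. -/
theorem gravitational_sector
    (L K : Fin 3 → (Fin 3 → ℝ))
    (hLindep : LinearIndependent ℝ L)
    (hLspan : Submodule.span ℝ (Set.range L) = ⊤)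
    (hC : ∀ μ ν : Fin 3, L μ ⬝ᵥ K ν + L ν ⬝ᵥ K μ = 0) :
    ∃ (χ0 : ℝ) (χ : Fin 3 → ℝ) (e : Fin 3 → (Fin 3 → ℝ)) (e0 : Fin 3 → ℝ),
      χ0 ≠ 0 ∧
      (∀ μ : Fin 3, K μ = crossProduct χ (e μ)) ∧
      (∀ μ : Fin 3, L μ = χ0 • e μ - e0 μ • χ) :=
  gravitational_sector_general L K hLindep hC
end

section
/- Let L₀, L₁, L₂ and K₀, K₁, K₂ be vectors in ℝ³ such that (K₀, K₁, K₂) is a basis of ℝ³ and the simplicity constraints hold: L_μ·K_ν + L_ν·K_μ = 0 for all μ, ν ∈ {0,1,2}. Then there exist a real number χ⁰ ≠ 0, a vector χ ∈ ℝ³, vectors e₀, e₁, e₂ ∈ ℝ³ and real numbers e⁰₀, e⁰₁, e⁰₂ such that L_μ = χ × e_μ and K_μ = χ⁰·e_μ − e⁰_μ·χ for all μ ∈ {0,1,2}. -/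
/-!
The constraints say that the linear map `A` with `A (K μ) = L μ` is skew-adjoint for the dot
product, since `A x ⬝ᵥ y + A y ⬝ᵥ x` is bilinear and vanishes on the basis `K`. A skew-adjoint
endomorphism of a three-dimensional space is a cross product `χ × ·`, so `L μ = χ × K μ`, and one
can take `χ⁰ = 1`, `e μ = K μ`, `e⁰ μ = 0`.
-/

open Matrix

theorem LinearMap.exists_eq_crossProduct_of_dotProduct_self_eq_zero {R : Type*} [CommRing R]
    (A : (Fin 3 → R) →ₗ[R] Fin 3 → R) (hA : ∀ x, A x ⬝ᵥ x = 0) :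
    ∃ χ : Fin 3 → R, A = crossProduct χ := by
  have diag (i : Fin 3) : A (Pi.single i 1) i = 0 := by
    simpa using hA (Pi.single i 1)
  have skew (i j : Fin 3) : A (Pi.single i 1) j = -A (Pi.single j 1) i := by
    have h := hA (Pi.single i 1 + Pi.single j 1)
    simp only [map_add, dotProduct_add, dotProduct_single, mul_one, Pi.add_apply, diag] at h
    linear_combination h
  refine ⟨![A (Pi.single 1 1) 2, A (Pi.single 2 1) 0, A (Pi.single 0 1) 1], ?_⟩
  ext j k
  fin_cases j <;> fin_cases k <;> simp [crossProduct, diag, skew 0 2, skew 1 0, skew 2 1]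

theorem dotProduct_add_dotProduct_eq_zero_of_basis {R ι n : Type*} [CommRing R] [Fintype n]
    (b : Module.Basis ι R (n → R)) (A : (n → R) →ₗ[R] n → R)
    (h : ∀ i j, A (b i) ⬝ᵥ b j + A (b j) ⬝ᵥ b i = 0) (x y : n → R) :
    A x ⬝ᵥ y + A y ⬝ᵥ x = 0 := by
  let B : (n → R) →ₗ[R] (n → R) →ₗ[R] R :=
    LinearMap.mk₂ R (fun x y => A x ⬝ᵥ y + A y ⬝ᵥ x)
      (by intros; simp only [map_add, add_dotProduct, dotProduct_add]; ring)
      (by intros; simp only [map_smul, smul_dotProduct, dotProduct_smul, smul_eq_mul]; ring)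
      (by intros; simp only [map_add, add_dotProduct, dotProduct_add]; ring)
      (by intros; simp only [map_smul, smul_dotProduct, dotProduct_smul, smul_eq_mul]; ring)
  have hB : B = 0 := LinearMap.ext_basis b b h
  exact LinearMap.congr_fun₂ hB x y

theorem topological_sector_general
    (L K : Fin 3 → (Fin 3 → ℝ))
    (hKindep : LinearIndependent ℝ K)
    (hC : ∀ μ ν : Fin 3, L μ ⬝ᵥ K ν + L ν ⬝ᵥ K μ = 0) :
    ∃ (χ0 : ℝ) (χ : Fin 3 → ℝ) (e : Fin 3 → (Fin 3 → ℝ)) (e0 : Fin 3 → ℝ),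
      χ0 ≠ 0 ∧
      (∀ μ : Fin 3, L μ = crossProduct χ (e μ)) ∧
      (∀ μ : Fin 3, K μ = χ0 • e μ - e0 μ • χ) := by
  let b := basisOfLinearIndependentOfCardEqFinrank hKindep (by simp)
  have hb : ⇑b = K := coe_basisOfLinearIndependentOfCardEqFinrank _ _
  let A := b.constr ℝ L
  have hAK (μ : Fin 3) : A (K μ) = L μ := by
    rw [← hb]
    exact b.constr_basis ℝ L μ
  have hskew := dotProduct_add_dotProduct_eq_zero_of_basis b A (by simpa [hb, hAK] using hC)
  obtain ⟨χ, hχ⟩ := A.exists_eq_crossProduct_of_dotProduct_self_eq_zero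
    fun x => by linarith [hskew x x]
  exact ⟨1, χ, K, 0, one_ne_zero, fun μ => by rw [← hAK, hχ], fun μ => by simp⟩

/-- **Topological sector of Proposition 1.**
If `(K 0, K 1, K 2)` is a basis of `ℝ³` (linearly independent and spanning) and the
simplicity constraints `L μ ⬝ᵥ K ν + L ν ⬝ᵥ K μ = 0` hold, then there exist `χ⁰ ≠ 0`,
`χ ∈ ℝ³`, vectors `e μ ∈ ℝ³` and scalars `e⁰ μ` such that `L μ = χ × e μ` and
`K μ = χ⁰ • e μ - e⁰ μ • χ`. -/
theorem topological_sector
    (L K : Fin 3 → (Fin 3 → ℝ))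
    (hKindep : LinearIndependent ℝ K)
    (hKspan : Submodule.span ℝ (Set.range K) = ⊤)
    (hC : ∀ μ ν : Fin 3, L μ ⬝ᵥ K ν + L ν ⬝ᵥ K μ = 0) :
    ∃ (χ0 : ℝ) (χ : Fin 3 → ℝ) (e : Fin 3 → (Fin 3 → ℝ)) (e0 : Fin 3 → ℝ),
      χ0 ≠ 0 ∧
      (∀ μ : Fin 3, L μ = crossProduct χ (e μ)) ∧
      (∀ μ : Fin 3, K μ = χ0 • e μ - e0 μ • χ) :=
  topological_sector_general L K hKindep hC
end

section
/- Let χ⁰ ∈ ℝ, χ ∈ ℝ³, e₀, e₁, e₂ ∈ ℝ³ and e⁰₀, e⁰₁, e⁰₂ ∈ ℝ, and define K_μ = χ × e_μ and L_μ = χ⁰·e_μ − e⁰_μ·χ for μ ∈ {0,1,2}. Then (i) the simplicity constraints hold: L_μ·K_ν + L_ν·K_μ = 0 for all μ, ν ∈ {0,1,2}; and (ii) the 3×3 real matrix whose rows are K₀, K₁, K₂ has determinant zero. -/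
open Matrix

/-!
Both claims reduce to the vanishing of triple products with a repeated factor. Expanding
`L μ ⬝ᵥ K ν`, the term `e⁰ μ • χ` pairs with `χ ⨯₃ e ν` to zero, leaving `χ⁰` times the triple
product `[e μ, χ, e ν]`, which is antisymmetric in `μ, ν`. Every row `χ ⨯₃ e μ` of `K` is
orthogonal to `χ`, so `χ` lies in the kernel of `K` and `det K = 0` (trivially when `χ = 0`).
-/

section CrossProduct

variable {R : Type*} [CommRing R]

theorem dotProduct_cross_add_dotProduct_cross_swap (χ u v : Fin 3 → R) :
    u ⬝ᵥ χ ⨯₃ v + v ⬝ᵥ χ ⨯₃ u = 0 := by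
  rw [triple_product_permutation v, triple_product_permutation u, ← cross_anticomm,
    dotProduct_neg, neg_add_cancel]

theorem sub_smul_dotProduct_cross_add_swap (χ u v : Fin 3 → R) (a b c : R) :
    (a • u - b • χ) ⬝ᵥ χ ⨯₃ v + (a • v - c • χ) ⬝ᵥ χ ⨯₃ u = 0 := by
  simp only [sub_dotProduct, smul_dotProduct, dot_self_cross, smul_eq_mul, mul_zero, sub_zero,
    ← mul_add, dotProduct_cross_add_dotProduct_cross_swap]

theorem mulVec_of_cross_self (χ : Fin 3 → R) (e : Fin 3 → Fin 3 → R) :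
    Matrix.of (fun μ => χ ⨯₃ e μ) *ᵥ χ = 0 := by
  ext μ
  simp only [mulVec, of_apply, Pi.zero_apply, dotProduct_comm _ χ, dot_self_cross]

end CrossProduct

theorem det_of_cross_eq_zero {F : Type*} [Field F] (χ : Fin 3 → F) (e : Fin 3 → Fin 3 → F) :
    (Matrix.of fun μ => χ ⨯₃ e μ).det = 0 := by
  by_cases hχ : χ = 0
  · exact det_eq_zero_of_row_eq_zero 0 fun j => by simp [hχ]
  · exact exists_mulVec_eq_zero_iff.mp ⟨χ, hχ, mulVec_of_cross_self χ e⟩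

/-- **Converse direction of Proposition 1 (gravitational sector).**
If `K μ = χ × e μ` and `L μ = χ⁰ • e μ - e⁰ μ • χ`, then the simplicity constraints
`L μ ⬝ᵥ K ν + L ν ⬝ᵥ K μ = 0` hold, and the 3×3 matrix whose rows are the `K μ`
has vanishing determinant. -/
theorem simple_B_satisfies_simplicity_and_detK_eq_zero
    (χ0 : ℝ) (χ : Fin 3 → ℝ) (e : Fin 3 → (Fin 3 → ℝ)) (e0 : Fin 3 → ℝ)
    (K L : Fin 3 → (Fin 3 → ℝ))
    (hK : ∀ μ : Fin 3, K μ = crossProduct χ (e μ))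
    (hL : ∀ μ : Fin 3, L μ = χ0 • e μ - e0 μ • χ) :
    (∀ μ ν : Fin 3, L μ ⬝ᵥ K ν + L ν ⬝ᵥ K μ = 0) ∧
    (Matrix.of K).det = 0 := by
  obtain rfl : K = fun μ => χ ⨯₃ e μ := funext hK
  obtain rfl : L = fun μ => χ0 • e μ - e0 μ • χ := funext hL
  exact ⟨fun μ ν => sub_smul_dotProduct_cross_add_swap χ (e μ) (e ν) χ0 (e0 μ) (e0 ν),
    det_of_cross_eq_zero χ e⟩
end

section
/- Let (L₀, L₁, L₂) be a basis of ℝ³ and let K₀, K₁, K₂ ∈ ℝ³ satisfy L_μ·K_ν + L_ν·K_μ = 0 for all μ, ν ∈ {0,1,2}. Then K₀, K₁, K₂ are linearly dependent (equivalently, the 3×3 matrix whose rows are K₀, K₁, K₂ has determinant zero). -/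
open Matrix

/-! Writing `M` and `N` for the matrices with rows `L μ` and `K μ`, the constraints say that
`M * Nᵀ` is skew-symmetric. A skew-symmetric matrix of odd size is singular, since
`det A = det Aᵀ = det (-A) = -det A`; as `M` is invertible, `det N = 0`. -/

theorem Matrix.det_of_ne_zero_of_linearIndependent {n R : Type*} [Fintype n] [DecidableEq n]
    [Field R] {L : n → n → R} (hL : LinearIndependent R L) : (of L).det ≠ 0 :=
  ((isUnit_iff_isUnit_det _).mp (linearIndependent_rows_iff_isUnit.mp hL)).ne_zero

theorem Matrix.det_eq_zero_of_transpose_eq_neg {n R : Type*} [Fintype n] [DecidableEq n]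
    [CommRing R] [IsAddTorsionFree R] {A : Matrix n n R}
    (hn : Odd (Fintype.card n)) (hA : Aᵀ = -A) : A.det = 0 :=
  self_eq_neg.mp <| calc
    A.det = Aᵀ.det := (det_transpose A).symm
    _ = -A.det := by rw [hA, det_neg, hn.neg_one_pow, neg_one_mul]

theorem Matrix.transpose_of_mul_transpose_of_eq_neg {m n R : Type*} [Fintype n] [CommRing R]
    {L K : m → n → R} (h : ∀ μ ν, L μ ⬝ᵥ K ν + L ν ⬝ᵥ K μ = 0) :
    (of L * (of K)ᵀ)ᵀ = -(of L * (of K)ᵀ) := by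
  ext μ ν
  simpa [mul_apply, dotProduct, eq_neg_iff_add_eq_zero, add_comm] using h μ ν

theorem Matrix.det_of_eq_zero_of_dotProduct_add_dotProduct_eq_zero {n R : Type*} [Fintype n]
    [DecidableEq n] [Field R] [IsAddTorsionFree R] {L K : n → n → R}
    (hn : Odd (Fintype.card n)) (hL : LinearIndependent R L)
    (h : ∀ μ ν, L μ ⬝ᵥ K ν + L ν ⬝ᵥ K μ = 0) : (of K).det = 0 := by
  have hGram : (of L * (of K)ᵀ).det = 0 :=
    det_eq_zero_of_transpose_eq_neg hn (transpose_of_mul_transpose_of_eq_neg h)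
  rw [det_mul, det_transpose] at hGram
  exact (mul_eq_zero.mp hGram).resolve_left (det_of_ne_zero_of_linearIndependent hL)

theorem simplicity_forces_K_dependent_general
    (L K : Fin 3 → (Fin 3 → ℝ))
    (hLindep : LinearIndependent ℝ L)
    (hC : ∀ μ ν : Fin 3, L μ ⬝ᵥ K ν + L ν ⬝ᵥ K μ = 0) :
    ¬ LinearIndependent ℝ K ∧ (Matrix.of K).det = 0 := by
  have hK : (of K).det = 0 :=
    det_of_eq_zero_of_dotProduct_add_dotProduct_eq_zero (by decide) hLindep hC
  exact ⟨fun hKindep => det_of_ne_zero_of_linearIndependent hKindep hK, hK⟩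

/-- **Key intermediate step of Proposition 1.**
If `(L 0, L 1, L 2)` is a basis of `ℝ³` and the simplicity constraints
`L μ ⬝ᵥ K ν + L ν ⬝ᵥ K μ = 0` hold, then the vectors `K 0, K 1, K 2` are linearly
dependent; equivalently, the 3×3 matrix whose rows are the `K μ` has determinant zero. -/
theorem simplicity_forces_K_dependent
    (L K : Fin 3 → (Fin 3 → ℝ))
    (hLindep : LinearIndependent ℝ L)
    (hLspan : Submodule.span ℝ (Set.range L) = ⊤)
    (hC : ∀ μ ν : Fin 3, L μ ⬝ᵥ K ν + L ν ⬝ᵥ K μ = 0) :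
    ¬ LinearIndependent ℝ K ∧ (Matrix.of K).det = 0 :=
  simplicity_forces_K_dependent_general L K hLindep hC
end

section
/- Let χ ∈ ℝ⁴ be nonzero and let B : Fin 4 → Fin 4 → ℝ be an antisymmetric matrix. Then the linear simplicity constraint Σ_{I∈Fin 4} χ_I·B(I,J) = 0 for all J ∈ Fin 4 holds if and only if there exists e ∈ ℝ⁴ such that B(I,J) = Σ_{K,L∈Fin 4} ε_{IJKL}·χ_K·e_L for all I, J. -/
/-!
A bivector `⋆(χ ∧ e)` is annihilated by `χ` because `ε_{IJKL}` is antisymmetric in `I, K` while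
`χ_I χ_K` is symmetric. Conversely, if `χ ≠ 0` annihilates the antisymmetric `B`, take for `e` the
contraction of the dual `⋆B` with `χ`, divided by `|χ|²`; an antisymmetric matrix is determined by
its six entries above the diagonal, and on each of them `B = ⋆(χ ∧ e)` is a linear combination of
the constraints.
-/

open Matrix

/-- The totally antisymmetric Levi-Civita symbol on `Fin 4`, with `ε 0 1 2 3 = 1`. -/
noncomputable def eps (I J K L : Fin 4) : ℝ :=
  Matrix.det (Matrix.of fun r c => if ![I, J, K, L] r = c then (1 : ℝ) else 0)

/-- A 4×4 real matrix is antisymmetric. -/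
def Antisym (B : Fin 4 → Fin 4 → ℝ) : Prop := ∀ I J, B J I = - B I J

open Finset Equiv

theorem det_of_ite_comp_perm {n R : Type*} [Fintype n] [DecidableEq n] [CommRing R]
    (v : n → n) (σ : Perm n) :
    (of fun r c => if v (σ r) = c then (1 : R) else 0).det =
      Perm.sign σ * (of fun r c => if v r = c then (1 : R) else 0).det :=
  det_permute σ (of fun r c => if v r = c then (1 : R) else 0)

theorem eps_swap_01 (I J K L : Fin 4) : eps J I K L = -eps I J K L := by
  have : ![J, I, K, L] = ![I, J, K, L] ∘ swap 0 1 := by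
    funext r; fin_cases r <;> rfl
  rw [eps, this, Function.comp_def, det_of_ite_comp_perm, Perm.sign_swap (by decide)]
  simp [eps]

theorem eps_swap_02 (I J K L : Fin 4) : eps K J I L = -eps I J K L := by
  have : ![K, J, I, L] = ![I, J, K, L] ∘ swap 0 2 := by
    funext r; fin_cases r <;> rfl
  rw [eps, this, Function.comp_def, det_of_ite_comp_perm, Perm.sign_swap (by decide)]
  simp [eps]

theorem sum_sum_mul_mul_eq_zero_of_antisymm {ι R : Type*} [Fintype ι] [CommRing R]
    [IsAddTorsionFree R] (f : ι → ι → R) (hf : ∀ i j, f j i = -f i j) (x : ι → R) :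
    ∑ i, ∑ j, f i j * x i * x j = 0 := by
  refine self_eq_neg.1 ?_
  calc ∑ i, ∑ j, f i j * x i * x j = ∑ j, ∑ i, f i j * x i * x j := sum_comm
    _ = ∑ j, ∑ i, -(f j i * x j * x i) := by
      refine sum_congr rfl fun j _ => sum_congr rfl fun i _ => ?_
      rw [hf j i]; ring
    _ = -∑ i, ∑ j, f i j * x i * x j := by simp only [sum_neg_distrib]

theorem Antisym.apply_self {B : Fin 4 → Fin 4 → ℝ} (hB : Antisym B) (I : Fin 4) : B I I = 0 :=
  self_eq_neg.1 (hB I I)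

theorem Antisym.eq_of_upper_eq {A B : Fin 4 → Fin 4 → ℝ} (hA : Antisym A) (hB : Antisym B)
    (h01 : A 0 1 = B 0 1) (h02 : A 0 2 = B 0 2) (h03 : A 0 3 = B 0 3)
    (h12 : A 1 2 = B 1 2) (h13 : A 1 3 = B 1 3) (h23 : A 2 3 = B 2 3) : A = B := by
  ext I J
  fin_cases I <;> fin_cases J <;>
    simp [hA.apply_self, hB.apply_self, hA 0 1, hA 0 2, hA 0 3, hA 1 2, hA 1 3, hA 2 3,
      hB 0 1, hB 0 2, hB 0 3, hB 1 2, hB 1 3, hB 2 3, *]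

/-- The simple bivector `⋆(χ ∧ e)`. -/
noncomputable def hodgeWedge (χ e : Fin 4 → ℝ) (I J : Fin 4) : ℝ :=
  ∑ K, ∑ L, eps I J K L * χ K * e L

theorem antisym_hodgeWedge (χ e : Fin 4 → ℝ) : Antisym (hodgeWedge χ e) := by
  intro I J
  simp only [hodgeWedge, eps_swap_01 I J, neg_mul, sum_neg_distrib]

theorem sum_mul_hodgeWedge (χ e : Fin 4 → ℝ) (J : Fin 4) :
    ∑ I, χ I * hodgeWedge χ e I J = 0 := by
  calc ∑ I, χ I * hodgeWedge χ e I J = ∑ I, ∑ K, ∑ L, eps I J K L * χ I * χ K * e L := by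
        simp only [hodgeWedge, mul_sum]
        congr! 3 with I - K - L
        ring
    _ = ∑ L, (∑ I, ∑ K, eps I J K L * χ I * χ K) * e L := by
        rw [sum_comm_cycle]
        simp only [sum_mul]
    _ = 0 := by
      simp [sum_sum_mul_mul_eq_zero_of_antisymm _ fun I K => eps_swap_02 I J K _]

theorem hodgeWedge_upper (χ e : Fin 4 → ℝ) :
    hodgeWedge χ e 0 1 = χ 2 * e 3 - χ 3 * e 2 ∧ hodgeWedge χ e 0 2 = χ 3 * e 1 - χ 1 * e 3 ∧
    hodgeWedge χ e 0 3 = χ 1 * e 2 - χ 2 * e 1 ∧ hodgeWedge χ e 1 2 = χ 0 * e 3 - χ 3 * e 0 ∧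
    hodgeWedge χ e 1 3 = χ 2 * e 0 - χ 0 * e 2 ∧ hodgeWedge χ e 2 3 = χ 0 * e 1 - χ 1 * e 0 := by
  refine ⟨?_, ?_, ?_, ?_, ?_, ?_⟩ <;>
  · simp [hodgeWedge, eps, det_succ_row_zero, Fin.sum_univ_succ, Fin.succAbove]
    ring

theorem exists_hodgeWedge_eq {χ : Fin 4 → ℝ} (hχ : χ ≠ 0) {B : Fin 4 → Fin 4 → ℝ}
    (hB : Antisym B) (h : ∀ J, ∑ I, χ I * B I J = 0) : ∃ e, B = hodgeWedge χ e := by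
  have hn : χ 0 * χ 0 + χ 1 * χ 1 + χ 2 * χ 2 + χ 3 * χ 3 ≠ 0 := by
    simpa [dotProduct, Fin.sum_univ_four, add_assoc] using mt dotProduct_self_eq_zero.1 hχ
  have h0 := h 0
  have h1 := h 1
  have h2 := h 2
  have h3 := h 3
  simp only [Fin.sum_univ_four, hB 0 1, hB 0 2, hB 0 3, hB 1 2, hB 1 3, hB 2 3, hB.apply_self]
    at h0 h1 h2 h3
  set n := χ 0 * χ 0 + χ 1 * χ 1 + χ 2 * χ 2 + χ 3 * χ 3
  -- `e_L = -Σ_M (⋆B)_{LM} χ_M / |χ|²` with `(⋆B)_{LM} = ½ Σ_{I,J} ε_{LMIJ} B_{IJ}`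
  set e : Fin 4 → ℝ := ![-(χ 1 * B 2 3 - χ 2 * B 1 3 + χ 3 * B 1 2) / n,
    (χ 0 * B 2 3 - χ 2 * B 0 3 + χ 3 * B 0 2) / n, -(χ 0 * B 1 3 - χ 1 * B 0 3 + χ 3 * B 0 1) / n,
    (χ 0 * B 1 2 - χ 1 * B 0 2 + χ 2 * B 0 1) / n]
  obtain ⟨e01, e02, e03, e12, e13, e23⟩ := hodgeWedge_upper χ e
  refine ⟨e, hB.eq_of_upper_eq (antisym_hodgeWedge χ e) ?_ ?_ ?_ ?_ ?_ ?_⟩ <;>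
    simp only [e01, e02, e03, e12, e13, e23, e, Matrix.cons_val] <;> field_simp
  · linear_combination χ 0 * h1 - χ 1 * h0
  · linear_combination χ 0 * h2 - χ 2 * h0
  · linear_combination χ 0 * h3 - χ 3 * h0
  · linear_combination χ 1 * h2 - χ 2 * h1
  · linear_combination χ 1 * h3 - χ 3 * h1
  · linear_combination χ 2 * h3 - χ 3 * h2

/-- For `χ ∈ ℝ⁴` nonzero and `B` antisymmetric, the linear simplicity constraint
`Σ_I χ_I B(I,J) = 0` (for all `J`) holds iff `B` is simple, i.e. there is `e ∈ ℝ⁴`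
with `B(I,J) = Σ_{K,L} ε_{IJKL} χ_K e_L`. -/
theorem linear_simplicity_iff_simple
    (χ : Fin 4 → ℝ) (hχ : χ ≠ 0)
    (B : Fin 4 → Fin 4 → ℝ) (hB : Antisym B) :
    (∀ J : Fin 4, (∑ I : Fin 4, χ I * B I J) = 0) ↔
    (∃ e : Fin 4 → ℝ, ∀ I J : Fin 4,
      B I J = ∑ K : Fin 4, ∑ L : Fin 4, eps I J K L * χ K * e L) := by
  constructor
  · intro h
    obtain ⟨e, rfl⟩ := exists_hodgeWedge_eq hχ hB h
    exact ⟨e, fun _ _ => rfl⟩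
  · rintro ⟨e, he⟩
    obtain rfl : B = hodgeWedge χ e := funext₂ he
    exact sum_mul_hodgeWedge χ e
end

section
/- Let χ⁰ ∈ ℝ, χ ∈ ℝ³, and for μ ∈ {0,1,2} let e_μ ∈ ℝ³ and e⁰_μ ∈ ℝ. Define B⁺_μ = −(χ × e_μ) + e⁰_μ·χ − χ⁰·e_μ and B⁻_μ = (χ × e_μ) + e⁰_μ·χ − χ⁰·e_μ. Then for all μ, ν ∈ {0,1,2}: B⁺_μ·B⁺_ν = B⁻_μ·B⁻_ν = (e_μ·e_ν)·(‖χ‖² + (χ⁰)²) − (χ·e_μ)·(χ·e_ν) + ‖χ‖²·e⁰_μ·e⁰_ν − χ⁰·(e⁰_μ·(χ·e_ν) + e⁰_ν·(χ·e_μ)). -/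
open Matrix

/-!
Write `B±_μ = ±c_μ + v_μ` with `c_μ = χ × e_μ` and `v_μ = e⁰_μ χ − χ⁰ e_μ`. The mixed terms
`c_μ · v_ν + v_μ · c_ν` reduce to `−χ⁰ (det(χ, e_μ, e_ν) + det(χ, e_ν, e_μ)) = 0`, because `c_μ ⊥ χ`
and the triple product is alternating; hence both signs give `c_μ · c_ν + v_μ · v_ν`, which the
Binet–Cauchy identity `(χ × a)·(χ × b) = ‖χ‖² (a·b) − (χ·a)(χ·b)` turns into the stated metric.
-/

section

variable {R : Type*} [CommRing R]

theorem add_dotProduct_add_of_cross_terms_eq_zero {n : Type*} [Fintype n] {c c' v v' : n → R}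
    (h : c ⬝ᵥ v' + v ⬝ᵥ c' = 0) : (c + v) ⬝ᵥ (c' + v') = c ⬝ᵥ c' + v ⬝ᵥ v' := by
  simp only [add_dotProduct, dotProduct_add]
  linear_combination h

theorem neg_add_dotProduct_neg_add_of_cross_terms_eq_zero {n : Type*} [Fintype n]
    {c c' v v' : n → R} (h : c ⬝ᵥ v' + v ⬝ᵥ c' = 0) :
    (-c + v) ⬝ᵥ (-c' + v') = c ⬝ᵥ c' + v ⬝ᵥ v' := by
  simp only [add_dotProduct, dotProduct_add, neg_dotProduct, dotProduct_neg]
  linear_combination -h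

theorem cross_dotProduct_smul_sub_smul_add_eq_zero (χ0 s t : R) (χ a b : Fin 3 → R) :
    χ ⨯₃ a ⬝ᵥ (t • χ - χ0 • b) + (s • χ - χ0 • a) ⬝ᵥ χ ⨯₃ b = 0 := by
  have hχ : χ ⨯₃ a ⬝ᵥ χ = 0 := by rw [dotProduct_comm, dot_self_cross]
  have htriple : χ ⨯₃ a ⬝ᵥ b + a ⬝ᵥ χ ⨯₃ b = 0 := by
    rw [dotProduct_comm, triple_product_permutation b, triple_product_permutation a,
      ← dotProduct_add, cross_anticomm']
    exact dotProduct_zero χ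
  simp only [dotProduct_sub, dotProduct_smul, sub_dotProduct, smul_dotProduct, smul_eq_mul,
    hχ, dot_self_cross]
  linear_combination -χ0 * htriple

theorem smul_sub_smul_dotProduct_smul_sub_smul (χ0 s t : R) (χ a b : Fin 3 → R) :
    (s • χ - χ0 • a) ⬝ᵥ (t • χ - χ0 • b) =
      s * t * (χ ⬝ᵥ χ) - χ0 * (s * (χ ⬝ᵥ b) + t * (χ ⬝ᵥ a)) + χ0 ^ 2 * (a ⬝ᵥ b) := by
  simp only [dotProduct_sub, dotProduct_smul, sub_dotProduct, smul_dotProduct, smul_eq_mul,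
    dotProduct_comm a χ]
  ring

end

/-- **Equality of the self-dual and anti-self-dual Urbantke metrics
(gravitational sector).**  With `B⁺ μ = −(χ × e μ) + e⁰ μ • χ − χ⁰ • e μ` and
`B⁻ μ = (χ × e μ) + e⁰ μ • χ − χ⁰ • e μ`, one has
`B⁺ μ ⬝ᵥ B⁺ ν = B⁻ μ ⬝ᵥ B⁻ ν = (e μ ⬝ᵥ e ν)(‖χ‖² + (χ⁰)²) − (χ ⬝ᵥ e μ)(χ ⬝ᵥ e ν)
+ ‖χ‖² e⁰ μ e⁰ ν − χ⁰ (e⁰ μ (χ ⬝ᵥ e ν) + e⁰ ν (χ ⬝ᵥ e μ))`. -/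
theorem urbantke_metrics_gravitational
    (χ0 : ℝ) (χ : Fin 3 → ℝ) (e : Fin 3 → (Fin 3 → ℝ)) (e0 : Fin 3 → ℝ)
    (Bp Bm : Fin 3 → (Fin 3 → ℝ))
    (hBp : ∀ μ : Fin 3, Bp μ = -(crossProduct χ (e μ)) + e0 μ • χ - χ0 • e μ)
    (hBm : ∀ μ : Fin 3, Bm μ = (crossProduct χ (e μ)) + e0 μ • χ - χ0 • e μ) :
    ∀ μ ν : Fin 3,
      Bp μ ⬝ᵥ Bp ν = Bm μ ⬝ᵥ Bm ν ∧
      Bp μ ⬝ᵥ Bp ν =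
        (e μ ⬝ᵥ e ν) * ((χ ⬝ᵥ χ) + χ0 ^ 2) - (χ ⬝ᵥ e μ) * (χ ⬝ᵥ e ν)
          + (χ ⬝ᵥ χ) * (e0 μ * e0 ν)
          - χ0 * (e0 μ * (χ ⬝ᵥ e ν) + e0 ν * (χ ⬝ᵥ e μ)) := by
  intro μ ν
  have hmixed := cross_dotProduct_smul_sub_smul_add_eq_zero χ0 (e0 μ) (e0 ν) χ (e μ) (e ν)
  simp only [hBp, hBm, add_sub_assoc]
  rw [neg_add_dotProduct_neg_add_of_cross_terms_eq_zero hmixed,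
    add_dotProduct_add_of_cross_terms_eq_zero hmixed, cross_dot_cross,
    smul_sub_smul_dotProduct_smul_sub_smul, dotProduct_comm (e μ) χ]
  exact ⟨rfl, by ring⟩
end

section
/- Let χ⁰ ∈ ℝ, χ ∈ ℝ³, and for μ ∈ {0,1,2} let e_μ ∈ ℝ³ and e⁰_μ ∈ ℝ. Define C⁺_μ = −(χ × e_μ) + e⁰_μ·χ − χ⁰·e_μ (the gravitational self-dual component) and D±_μ = −(χ × e_μ) ± (e⁰_μ·χ − χ⁰·e_μ) (the topological self-dual and anti-self-dual components). Then for all μ, ν ∈ {0,1,2}: D⁺_μ·D⁺_ν = D⁻_μ·D⁻_ν = C⁺_μ·C⁺_ν, i.e. the Urbantke metrics of the topological sector coincide with each other and with the Urbantke metric of the gravitational sector, the common value being g_{μν} = (e_μ·e_ν)·(‖χ‖² + (χ⁰)²) − (χ·e_μ)·(χ·e_ν) + ‖χ‖²·e⁰_μ·e⁰_ν − χ⁰·(e⁰_μ·(χ·e_ν) + e⁰_ν·(χ·e_μ)). -/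
/-!
Write each component as `a μ ± b μ` with `a μ = -(χ × e μ)` and `b μ = e⁰ μ χ - χ⁰ e μ`; the
gravitational `C⁺` is literally the topological `D⁺`. The metrics of `a ± b` differ only in the
sign of the mixed terms `a μ ⬝ b ν + b μ ⬝ a ν`, and these cancel: the `χ`-parts of `b` are
orthogonal to `χ × e`, and what remains is `χ⁰` times the antisymmetric triple product
`[χ, e μ, e ν] + [χ, e ν, e μ] = 0`. The common value then follows from Lagrange's identity
`(χ × u) ⬝ (χ × w) = ‖χ‖² (u ⬝ w) - (χ ⬝ u)(χ ⬝ w)`.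
-/

open Matrix

theorem add_dotProduct_add {n R : Type*} [Fintype n] [NonUnitalNonAssocSemiring R]
    (a b a' b' : n → R) :
    (a + b) ⬝ᵥ (a' + b') = a ⬝ᵥ a' + b ⬝ᵥ b' + (a ⬝ᵥ b' + b ⬝ᵥ a') := by
  simp only [add_dotProduct, dotProduct_add]
  abel

theorem add_dotProduct_add_eq_sub_dotProduct_sub {n R : Type*} [Fintype n] [CommRing R]
    {a b a' b' : n → R} (h : a ⬝ᵥ b' + b ⬝ᵥ a' = 0) :
    (a + b) ⬝ᵥ (a' + b') = (a - b) ⬝ᵥ (a' - b') := by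
  simp only [add_dotProduct, dotProduct_add, sub_dotProduct, dotProduct_sub]
  linear_combination (2 : R) * h

section CrossProduct

variable {R : Type*} [CommRing R]

theorem cross_dotProduct_eq_neg_cross_dotProduct (v u w : Fin 3 → R) :
    v ⨯₃ u ⬝ᵥ w = -(v ⨯₃ w ⬝ᵥ u) := by
  rw [dotProduct_comm, triple_product_permutation, ← cross_anticomm, dotProduct_neg,
    ← triple_product_permutation, dotProduct_comm u]

theorem cross_dotProduct_smul_sub_smul (v u w : Fin 3 → R) (t c : R) :
    v ⨯₃ u ⬝ᵥ (t • v - c • w) = -(c * (v ⨯₃ u ⬝ᵥ w)) := by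
  rw [dotProduct_sub, dotProduct_smul, dotProduct_smul, dotProduct_comm, dot_self_cross]
  simp

theorem neg_cross_dotProduct_add_dotProduct_neg_cross (v u w : Fin 3 → R) (s t c : R) :
    -(v ⨯₃ u) ⬝ᵥ (t • v - c • w) + (s • v - c • u) ⬝ᵥ -(v ⨯₃ w) = 0 := by
  rw [neg_dotProduct, dotProduct_neg, dotProduct_comm (s • v - c • u),
    cross_dotProduct_smul_sub_smul, cross_dotProduct_smul_sub_smul,
    cross_dotProduct_eq_neg_cross_dotProduct v w u]
  ring

theorem neg_cross_add_dotProduct_neg_cross_add (v u w : Fin 3 → R) (s t c : R) :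
    (-(v ⨯₃ u) + (s • v - c • u)) ⬝ᵥ (-(v ⨯₃ w) + (t • v - c • w)) =
      (u ⬝ᵥ w) * (v ⬝ᵥ v + c ^ 2) - (v ⬝ᵥ u) * (v ⬝ᵥ w) + (v ⬝ᵥ v) * (s * t)
        - c * (s * (v ⬝ᵥ w) + t * (v ⬝ᵥ u)) := by
  rw [add_dotProduct_add, neg_cross_dotProduct_add_dotProduct_neg_cross, neg_dotProduct_neg,
    cross_dot_cross]
  simp only [sub_dotProduct, dotProduct_sub, smul_dotProduct, dotProduct_smul, smul_eq_mul,
    dotProduct_comm u v]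
  ring

end CrossProduct

/-- **Equality of the Urbantke metrics of the topological and gravitational
sectors.**  With `C⁺ μ = −(χ × e μ) + e⁰ μ • χ − χ⁰ • e μ` (gravitational
self-dual component) and `D± μ = −(χ × e μ) ± (e⁰ μ • χ − χ⁰ • e μ)` (topological
(anti-)self-dual components), the Urbantke metrics coincide:
`D⁺ μ ⬝ᵥ D⁺ ν = D⁻ μ ⬝ᵥ D⁻ ν = C⁺ μ ⬝ᵥ C⁺ ν`, the common value being
`(e μ ⬝ᵥ e ν)(‖χ‖² + (χ⁰)²) − (χ ⬝ᵥ e μ)(χ ⬝ᵥ e ν) + ‖χ‖² e⁰ μ e⁰ ν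
− χ⁰ (e⁰ μ (χ ⬝ᵥ e ν) + e⁰ ν (χ ⬝ᵥ e μ))`. -/
theorem urbantke_metrics_topological_eq_gravitational
    (χ0 : ℝ) (χ : Fin 3 → ℝ) (e : Fin 3 → (Fin 3 → ℝ)) (e0 : Fin 3 → ℝ)
    (Cp Dp Dm : Fin 3 → (Fin 3 → ℝ))
    (hCp : ∀ μ : Fin 3, Cp μ = -(crossProduct χ (e μ)) + e0 μ • χ - χ0 • e μ)
    (hDp : ∀ μ : Fin 3, Dp μ = -(crossProduct χ (e μ)) + (e0 μ • χ - χ0 • e μ))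
    (hDm : ∀ μ : Fin 3, Dm μ = -(crossProduct χ (e μ)) - (e0 μ • χ - χ0 • e μ)) :
    ∀ μ ν : Fin 3,
      Dp μ ⬝ᵥ Dp ν = Dm μ ⬝ᵥ Dm ν ∧
      Dp μ ⬝ᵥ Dp ν = Cp μ ⬝ᵥ Cp ν ∧
      Dp μ ⬝ᵥ Dp ν =
        (e μ ⬝ᵥ e ν) * ((χ ⬝ᵥ χ) + χ0 ^ 2) - (χ ⬝ᵥ e μ) * (χ ⬝ᵥ e ν)
          + (χ ⬝ᵥ χ) * (e0 μ * e0 ν)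
          - χ0 * (e0 μ * (χ ⬝ᵥ e ν) + e0 ν * (χ ⬝ᵥ e μ)) := by
  intro μ ν
  have hCp_eq_Dp : ∀ μ, Cp μ = Dp μ := fun μ => by rw [hCp, hDp, add_sub_assoc]
  refine ⟨?_, by rw [hCp_eq_Dp, hCp_eq_Dp], ?_⟩
  · rw [hDp, hDp, hDm, hDm]
    exact add_dotProduct_add_eq_sub_dotProduct_sub
      (neg_cross_dotProduct_add_dotProduct_neg_cross χ (e μ) (e ν) (e0 μ) (e0 ν) χ0)
  · rw [hDp, hDp]
    exact neg_cross_add_dotProduct_neg_cross_add χ (e μ) (e ν) (e0 μ) (e0 ν) χ0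
end

section
/- Let χ⁰ ∈ ℝ with χ⁰ ≠ 0, χ ∈ ℝ³, and for μ ∈ {0,1,2} let e_μ ∈ ℝ³ and e⁰_μ ∈ ℝ. Define K_μ = χ × e_μ, L_μ = χ⁰·e_μ − e⁰_μ·χ, and B±_μ = ∓K_μ − L_μ. Then det(B⁺) = det(B⁻) = −(1 + ‖χ‖²/(χ⁰)²)·det(L), where det(B±) and det(L) denote the determinants of the 3×3 matrices whose rows are B±₀, B±₁, B±₂ and L₀, L₁, L₂ respectively. In particular, det(B⁺) and det(B⁻) have the same sign: ε⁺ = ε⁻ in the gravitational sector. -/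
/-!
Since `χ × χ = 0`, we have `χ × L_μ = χ⁰ K_μ`, so every row of `B±` is the image of the
corresponding row of `L` under the one linear map `v ↦ -v ∓ (χ⁰)⁻¹ χ × v`. Hence
`det B± = det(-1 ∓ (χ⁰)⁻¹ [χ]ₓ) · det L`, where `[a]ₓ` is the skew matrix of `v ↦ a × v`,
and `det(c + [a]ₓ) = c (c² + ‖a‖²)`.
-/

open Matrix

theorem Matrix.det_of_map_rows {R n : Type*} [CommRing R] [Fintype n] [DecidableEq n]
    (f : (n → R) →ₗ[R] n → R) (v : n → n → R) :
    (of fun i => f (v i)).det = LinearMap.det f * (of v).det := by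
  have h : (of fun i => f (v i)) = of v * (LinearMap.toMatrix' f)ᵀ := by
    ext i j
    rw [of_apply, ← LinearMap.toMatrix'_mulVec f (v i)]
    simp only [mulVec, dotProduct, mul_apply, of_apply, transpose_apply, mul_comm]
  rw [h, det_mul, det_transpose, LinearMap.det_toMatrix', mul_comm]

theorem det_smul_id_add_crossProduct {R : Type*} [CommRing R] (c : R) (a : Fin 3 → R) :
    LinearMap.det (c • LinearMap.id + crossProduct a) = c * (c ^ 2 + a ⬝ᵥ a) := by
  rw [← LinearMap.det_toMatrix', det_fin_three]
  simp only [Fin.isValue, LinearMap.toMatrix'_apply, LinearMap.add_apply, LinearMap.smul_apply,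
    LinearMap.id_coe, id_eq, cross_apply, Nat.succ_eq_add_one, Nat.reduceAdd, ne_eq, Fin.reduceEq,
    not_false_eq_true, Pi.single_eq_of_ne, mul_zero, one_ne_zero, sub_self, Pi.single_eq_same,
    mul_one, sub_zero, zero_sub, Pi.add_apply, Pi.smul_apply, smul_eq_mul, cons_val_zero, add_zero,
    zero_ne_one, cons_val_one, cons_val, zero_add, mul_neg, neg_mul, sub_neg_eq_add, neg_neg,
    dotProduct, Fin.sum_univ_three]
  ring

theorem det_of_neg_add_crossProduct {R : Type*} [CommRing R] (a : Fin 3 → R)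
    (v : Fin 3 → Fin 3 → R) :
    (of fun i => -v i + a ⨯₃ v i).det = -(1 + a ⬝ᵥ a) * (of v).det := by
  have h := Matrix.det_of_map_rows ((-1 : R) • LinearMap.id + crossProduct a) v
  simp only [LinearMap.add_apply, LinearMap.smul_apply, LinearMap.id_apply, neg_one_smul] at h
  rw [h, det_smul_id_add_crossProduct]
  ring

theorem crossProduct_smul_sub_smul_self {R : Type*} [CommRing R] (a v : Fin 3 → R) (s t : R) :
    a ⨯₃ (s • v - t • a) = s • a ⨯₃ v := by
  simp [cross_self]

/-- **Sign of `det(±B)` in the gravitational sector (Appendix C.1).**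
With `K μ = χ × e μ`, `L μ = χ⁰ • e μ − e⁰ μ • χ` and `B± μ = ∓ K μ − L μ`, one has
`det B⁺ = det B⁻ = −(1 + ‖χ‖²/(χ⁰)²) det L`; in particular `det B⁺` and `det B⁻`
have the same sign: `ε⁺ = ε⁻`. -/
theorem det_selfdual_gravitational
    (χ0 : ℝ) (hχ0 : χ0 ≠ 0) (χ : Fin 3 → ℝ) (e : Fin 3 → (Fin 3 → ℝ)) (e0 : Fin 3 → ℝ)
    (K L Bp Bm : Fin 3 → (Fin 3 → ℝ))
    (hK : ∀ μ : Fin 3, K μ = crossProduct χ (e μ))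
    (hL : ∀ μ : Fin 3, L μ = χ0 • e μ - e0 μ • χ)
    (hBp : ∀ μ : Fin 3, Bp μ = -(K μ) - L μ)
    (hBm : ∀ μ : Fin 3, Bm μ = K μ - L μ) :
    (Matrix.of Bp).det = -(1 + (χ ⬝ᵥ χ) / χ0 ^ 2) * (Matrix.of L).det ∧
    (Matrix.of Bm).det = -(1 + (χ ⬝ᵥ χ) / χ0 ^ 2) * (Matrix.of L).det ∧
    Real.sign (Matrix.of Bp).det = Real.sign (Matrix.of Bm).det := by
  have hKL (μ : Fin 3) : K μ = (χ0⁻¹ • χ) ⨯₃ L μ := by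
    rw [map_smul, LinearMap.smul_apply, hL, crossProduct_smul_sub_smul_self, smul_smul,
      inv_mul_cancel₀ hχ0, one_smul, hK]
  have hnorm : χ0⁻¹ • χ ⬝ᵥ χ0⁻¹ • χ = χ ⬝ᵥ χ / χ0 ^ 2 := by
    simp only [smul_dotProduct, dotProduct_smul, smul_eq_mul]
    field_simp
  have hp : (of Bp).det = -(1 + χ ⬝ᵥ χ / χ0 ^ 2) * (of L).det := by
    have hrows : Bp = fun μ => -L μ + (-(χ0⁻¹ • χ)) ⨯₃ L μ := by
      ext1 μ
      rw [hBp, hKL, map_neg, LinearMap.neg_apply]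
      abel
    rw [hrows, det_of_neg_add_crossProduct, neg_dotProduct_neg, hnorm]
  have hm : (of Bm).det = -(1 + χ ⬝ᵥ χ / χ0 ^ 2) * (of L).det := by
    have hrows : Bm = fun μ => -L μ + (χ0⁻¹ • χ) ⨯₃ L μ := by
      ext1 μ
      rw [hBm, hKL]
      abel
    rw [hrows, det_of_neg_add_crossProduct, hnorm]
  exact ⟨hp, hm, by rw [hp, hm]⟩
end

section
/- Let χ⁰ ∈ ℝ with χ⁰ ≠ 0, χ ∈ ℝ³, and for μ ∈ {0,1,2} let e_μ ∈ ℝ³ and e⁰_μ ∈ ℝ. Define K_μ = χ⁰·e_μ − e⁰_μ·χ, L_μ = χ × e_μ, and B±_μ = ∓K_μ − L_μ. Then det(B±) = ∓(1 + ‖χ‖²/(χ⁰)²)·det(K), where det(B±) and det(K) denote the determinants of the 3×3 matrices whose rows are B±₀, B±₁, B±₂ and K₀, K₁, K₂ respectively. In particular, det(B⁺) = −det(B⁻), so in the topological sector the signs satisfy ε⁺ = −ε⁻ whenever det(K) ≠ 0. -/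
open Matrix

/-!
Since `χ × χ = 0`, taking `χ × ·` of `K μ = χ⁰ e μ - e⁰ μ χ` gives `χ⁰ L μ = χ × K μ`. Hence
`B± μ = (∓1 + [-χ/χ⁰]×) K μ` is the image of `K μ` under one fixed linear map, and
`det (s + [w]×) = s (s² + ‖w‖²)` for the skew matrix `[w]×` of `w × ·`.
-/

variable {R : Type*} [CommRing R]

def crossMatrix (w : Fin 3 → R) : Matrix (Fin 3) (Fin 3) R :=
  !![0, -w 2, w 1; w 2, 0, -w 0; -w 1, w 0, 0]

theorem crossMatrix_mulVec (w v : Fin 3 → R) : crossMatrix w *ᵥ v = w ⨯₃ v := by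
  ext i
  fin_cases i <;>
    simp only [crossMatrix, mulVec, vec3_dotProduct, cross_apply, of_apply, cons_val', cons_val_zero,
      cons_val_one, cons_val, cons_val_fin_one, Fin.zero_eta, Fin.mk_one, Fin.reduceFinMk] <;>
    ring

theorem det_smul_one_add_crossMatrix (s : R) (w : Fin 3 → R) :
    (s • (1 : Matrix (Fin 3) (Fin 3) R) + crossMatrix w).det = s * (s ^ 2 + w ⬝ᵥ w) := by
  rw [crossMatrix, det_fin_three, vec3_dotProduct]
  simp only [Matrix.add_apply, Matrix.smul_apply, one_apply, ↓reduceIte, smul_eq_mul, mul_one,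
    of_apply, cons_val', cons_val_zero, cons_val_fin_one, add_zero, cons_val_one, cons_val,
    Fin.reduceEq, mul_zero, zero_add, mul_neg, neg_mul, sub_neg_eq_add, neg_neg]
  ring

theorem of_mulVec_eq_mul_transpose {l m n : Type*} [Fintype n] (M : Matrix l n R)
    (v : m → n → R) :
    Matrix.of (fun i => M *ᵥ v i) = Matrix.of v * Mᵀ := by
  ext i j
  simp [mul_apply, mulVec, dotProduct, mul_comm]

theorem det_of_smul_add_cross (s : R) (w : Fin 3 → R) (v : Fin 3 → Fin 3 → R) :
    (Matrix.of fun i => s • v i + w ⨯₃ v i).det = s * (s ^ 2 + w ⬝ᵥ w) * (Matrix.of v).det := by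
  have hrow (i : Fin 3) : s • v i + w ⨯₃ v i = (s • 1 + crossMatrix w) *ᵥ v i := by
    rw [add_mulVec, smul_mulVec, one_mulVec, crossMatrix_mulVec]
  simp only [hrow, of_mulVec_eq_mul_transpose, det_mul, det_transpose,
    det_smul_one_add_crossMatrix, mul_comm (Matrix.of v).det]

theorem cross_smul_sub_smul_self (w v : Fin 3 → R) (a b : R) :
    w ⨯₃ (a • v - b • w) = a • w ⨯₃ v := by
  simp [map_sub, map_smul, cross_self]

/-- **Sign of `det(±B)` in the topological sector (Appendix C.2).**
With `K μ = χ⁰ • e μ − e⁰ μ • χ`, `L μ = χ × e μ` and `B± μ = ∓ K μ − L μ`, one has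
`det B± = ∓(1 + ‖χ‖²/(χ⁰)²) det K`; in particular `det B⁺ = −det B⁻`, so the signs
satisfy `ε⁺ = −ε⁻` whenever `det K ≠ 0`. -/
theorem det_selfdual_topological
    (χ0 : ℝ) (hχ0 : χ0 ≠ 0) (χ : Fin 3 → ℝ) (e : Fin 3 → (Fin 3 → ℝ)) (e0 : Fin 3 → ℝ)
    (K L Bp Bm : Fin 3 → (Fin 3 → ℝ))
    (hK : ∀ μ : Fin 3, K μ = χ0 • e μ - e0 μ • χ)
    (hL : ∀ μ : Fin 3, L μ = crossProduct χ (e μ))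
    (hBp : ∀ μ : Fin 3, Bp μ = -(K μ) - L μ)
    (hBm : ∀ μ : Fin 3, Bm μ = K μ - L μ) :
    (Matrix.of Bp).det = -(1 + (χ ⬝ᵥ χ) / χ0 ^ 2) * (Matrix.of K).det ∧
    (Matrix.of Bm).det = (1 + (χ ⬝ᵥ χ) / χ0 ^ 2) * (Matrix.of K).det ∧
    (Matrix.of Bp).det = -(Matrix.of Bm).det ∧
    ((Matrix.of K).det ≠ 0 →
      Real.sign (Matrix.of Bp).det = - Real.sign (Matrix.of Bm).det) := by
  set w := -(χ0⁻¹ • χ) with hw_def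
  have hLK (μ : Fin 3) : L μ = -(w ⨯₃ K μ) := by
    rw [hL, hK, hw_def, map_neg, LinearMap.neg_apply, neg_neg, LinearMap.map_smul₂,
      cross_smul_sub_smul_self, inv_smul_smul₀ hχ0]
  have hw : w ⬝ᵥ w = χ ⬝ᵥ χ / χ0 ^ 2 := by
    simp only [w, neg_dotProduct, dotProduct_neg, smul_dotProduct, dotProduct_smul,
      smul_eq_mul]
    field_simp
  have hdet (s : ℝ) (B : Fin 3 → Fin 3 → ℝ) (hB : ∀ μ, B μ = s • K μ + w ⨯₃ K μ) :
      (Matrix.of B).det = s * (s ^ 2 + χ ⬝ᵥ χ / χ0 ^ 2) * (Matrix.of K).det := by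
    rw [← hw, ← det_of_smul_add_cross, funext hB]
  have hdetBp : (Matrix.of Bp).det = -(1 + χ ⬝ᵥ χ / χ0 ^ 2) * (Matrix.of K).det := by
    rw [hdet (-1) Bp fun μ => by rw [hBp, hLK, neg_one_smul, sub_neg_eq_add]]
    ring
  have hdetBm : (Matrix.of Bm).det = (1 + χ ⬝ᵥ χ / χ0 ^ 2) * (Matrix.of K).det := by
    rw [hdet 1 Bm fun μ => by rw [hBm, hLK, one_smul, sub_neg_eq_add]]
    ring
  have hBpBm : (Matrix.of Bp).det = -(Matrix.of Bm).det := by rw [hdetBp, hdetBm, neg_mul]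
  exact ⟨hdetBp, hdetBm, hBpBm, fun _ => by rw [hBpBm, Real.sign_neg]⟩
end
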